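/- arXiv:1710.05132 — 2 statements merged into one kernel-verified Lean document; each statement's English description precedes it below -/
import Mathlib

section
/- Let l ∈ ℤ with l ≠ 0 and let f ∈ Y_l. Setting φ = A_l^{−1}f, one has ‖φ‖ ≤ (1/2)‖f‖ if |l| = 1 and ‖φ‖ ≤ l^{−2}‖f‖ if |l| ≥ 2, and consequently Re⟨f, f + φ⟩_{L²(𝕋)} ≥ (1/2)‖f‖². -/
/-!
STATEMENT 6: For `l ∈ ℤ \ {0}` and `f ∈ Y_l`, setting `φ = A_l⁻¹ f` one has
`‖φ‖ ≤ (1/2)‖f‖` if `|l| = 1`, `‖φ‖ ≤ l⁻²‖f‖` if `|l| ≥ 2`, and consequently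
`Re⟨f, f + φ⟩ ≥ (1/2)‖f‖²`.

We work on `𝕋 = ℝ/(2πℤ)` with the (normalized) Haar measure; `A_l⁻¹` is
characterized through Fourier coefficients: `φ = A_l⁻¹ u` is the unique
`φ ∈ H²(𝕋)` with `φ'' - l²φ = u`, i.e. `(n² + l²) φ̂(n) = -û(n)` for all `n`.
-/

open MeasureTheory Complex Real AddCircle

noncomputable section

instance fact2pi : Fact (0 < 2 * Real.pi) := ⟨by positivity⟩

/-- `L²(𝕋)` with respect to the normalized Haar measure on `𝕋 = ℝ/(2πℤ)`. -/
abbrev HT : Type := Lp ℂ 2 (@AddCircle.haarAddCircle (2 * Real.pi) fact2pi)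

/-- The `n`-th Fourier coefficient of `u ∈ L²(𝕋)`. -/
def coefT (u : HT) (n : ℤ) : ℂ := fourierCoeff (↑u) n

/-!
On Fourier coefficients `A_l⁻¹` acts as multiplication by `-(n² + l²)⁻¹`, so by Parseval its
norm is controlled by the smallest value of `n² + l²` over the frequencies `f` charges: this is
`l²` in general, and `2` when `|l| = 1` and the mean of `f` vanishes. In both cases
`‖φ‖ ≤ ‖f‖ / 2`, and then `Re⟨f, f + φ⟩ ≥ ‖f‖² - ‖f‖ ‖φ‖ ≥ ‖f‖² / 2`.
-/

theorem hasSum_sq_norm_fourierCoeff {T : ℝ} [Fact (0 < T)] (f : Lp ℂ 2 (haarAddCircle (T := T))) :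
    HasSum (fun n => ‖fourierCoeff f n‖ ^ 2) (‖f‖ ^ 2) := by
  simp_rw [← fourierBasis_repr, ← fourierBasis.repr.norm_map f]
  apply_mod_cast lp.hasSum_norm (by simp) (fourierBasis.repr f)

theorem norm_le_mul_norm_of_fourierCoeff_le {T : ℝ} [Fact (0 < T)]
    {f g : Lp ℂ 2 (haarAddCircle (T := T))} {c : ℝ} (hc : 0 ≤ c)
    (h : ∀ n, ‖fourierCoeff f n‖ ≤ c * ‖fourierCoeff g n‖) : ‖f‖ ≤ c * ‖g‖ := by
  have hsq : ‖f‖ ^ 2 ≤ (c * ‖g‖) ^ 2 := by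
    rw [mul_pow]
    refine hasSum_le (fun n => ?_) (hasSum_sq_norm_fourierCoeff f)
      ((hasSum_sq_norm_fourierCoeff g).mul_left (c ^ 2))
    rw [← mul_pow]
    exact pow_le_pow_left₀ (norm_nonneg _) (h n) 2
  exact (pow_le_pow_iff_left₀ (norm_nonneg f) (by positivity) two_ne_zero).1 hsq

theorem one_sub_mul_sq_norm_le_re_inner_add {𝕜 E : Type*} [RCLike 𝕜] [NormedAddCommGroup E]
    [InnerProductSpace 𝕜 E] {x y : E} {c : ℝ} (h : ‖y‖ ≤ c * ‖x‖) :
    (1 - c) * ‖x‖ ^ 2 ≤ RCLike.re (inner 𝕜 x (x + y)) := by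
  have hxy : -(‖x‖ * ‖y‖) ≤ RCLike.re (inner 𝕜 x y) :=
    neg_le_of_abs_le ((RCLike.abs_re_le_norm _).trans (norm_inner_le_norm x y))
  rw [inner_add_right, map_add, inner_self_eq_norm_sq]
  nlinarith [norm_nonneg x]

theorem sq_add_sq_mul_norm_eq {n l : ℤ} {a b : ℂ} (h : ((n : ℂ) ^ 2 + (l : ℂ) ^ 2) * a = -b) :
    ((n : ℝ) ^ 2 + (l : ℝ) ^ 2) * ‖a‖ = ‖b‖ := by
  have hcast : (n : ℂ) ^ 2 + (l : ℂ) ^ 2 = (((n : ℝ) ^ 2 + (l : ℝ) ^ 2 : ℝ) : ℂ) := by push_cast; ring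
  rw [← norm_neg b, ← h, norm_mul, hcast, Complex.norm_real, Real.norm_of_nonneg (by positivity)]

theorem norm_le_inv_sq_mul_of_sq_add_sq_mul_eq_neg {n l : ℤ} {a b : ℂ} (hl : l ≠ 0)
    (h : ((n : ℂ) ^ 2 + (l : ℂ) ^ 2) * a = -b) : ‖a‖ ≤ ((l : ℝ) ^ 2)⁻¹ * ‖b‖ := by
  have hl2 : 0 < (l : ℝ) ^ 2 := by positivity
  rw [← sq_add_sq_mul_norm_eq h, le_inv_mul_iff₀ hl2]
  nlinarith [norm_nonneg a, sq_nonneg (n : ℝ)]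

theorem norm_le_half_mul_of_sq_add_sq_mul_eq_neg {n l : ℤ} {a b : ℂ} (hl : |l| = 1)
    (h : ((n : ℂ) ^ 2 + (l : ℂ) ^ 2) * a = -b) (hb : n = 0 → b = 0) : ‖a‖ ≤ 1 / 2 * ‖b‖ := by
  have hl2 : (l : ℝ) ^ 2 = 1 := by rw [← sq_abs, ← Int.cast_abs, hl]; norm_num
  have hab := sq_add_sq_mul_norm_eq h
  rcases eq_or_ne n 0 with rfl | hn
  · rw [hb rfl, norm_zero] at hab ⊢
    simpa [hl2] using hab
  · have hn2 : (1 : ℝ) ≤ (n : ℝ) ^ 2 := by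
      rw [← sq_abs, ← Int.cast_abs]; exact_mod_cast one_le_pow₀ (Int.one_le_abs hn)
    rw [← hab]
    nlinarith [norm_nonneg a]

theorem inv_sq_le_half {l : ℤ} (hl : 2 ≤ |l|) : ((l : ℝ) ^ 2)⁻¹ ≤ 1 / 2 := by
  have : (4 : ℝ) ≤ (l : ℝ) ^ 2 := by
    have h2 : (2 : ℝ) ≤ ((|l| : ℤ) : ℝ) := by exact_mod_cast hl
    rw [← sq_abs, ← Int.cast_abs]
    nlinarith
  rw [inv_le_comm₀ (by positivity) (by norm_num)]
  linarith

theorem stmt6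
    (invA : ℤ → HT → HT)
    -- `invA l` is the inverse of `A_l = d²/dy² - l²`, characterized through Fourier
    -- coefficients: `φ = invA l u` is the unique `φ ∈ H²` with `φ'' - l² φ = u`.
    (hinvA : ∀ (l : ℤ), l ≠ 0 → ∀ (u : HT) (n : ℤ),
      ((n : ℂ)^2 + (l : ℂ)^2) * coefT (invA l u) n = - coefT u n)
    (l : ℤ) (hl : l ≠ 0)
    (f : HT)
    -- `f ∈ Y_l` : if `|l| = 1` then `f` has mean zero
    (hf : |l| = 1 → coefT f 0 = 0) :
    (|l| = 1 → ‖invA l f‖ ≤ (1/2) * ‖f‖) ∧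
    (2 ≤ |l| → ‖invA l f‖ ≤ ((l : ℝ)^2)⁻¹ * ‖f‖) ∧
    (1/2) * ‖f‖^2 ≤ (inner ℂ f (f + invA l f) : ℂ).re := by
  have h_abs_one : |l| = 1 → ‖invA l f‖ ≤ 1 / 2 * ‖f‖ := fun h1 =>
    norm_le_mul_norm_of_fourierCoeff_le (by norm_num) fun n =>
      norm_le_half_mul_of_sq_add_sq_mul_eq_neg h1 (hinvA l hl f n) (by rintro rfl; exact hf h1)
  have h_inv_sq : ‖invA l f‖ ≤ ((l : ℝ) ^ 2)⁻¹ * ‖f‖ :=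
    norm_le_mul_norm_of_fourierCoeff_le (by positivity) fun n =>
      norm_le_inv_sq_mul_of_sq_add_sq_mul_eq_neg hl (hinvA l hl f n)
  have hhalf : ‖invA l f‖ ≤ 1 / 2 * ‖f‖ := by
    obtain h1 | h2 : |l| = 1 ∨ 2 ≤ |l| := by have := abs_pos.2 hl; omega
    · exact h_abs_one h1
    · exact h_inv_sq.trans (mul_le_mul_of_nonneg_right (inv_sq_le_half h2) (norm_nonneg f))
  refine ⟨h_abs_one, fun _ => h_inv_sq, ?_⟩
  convert one_sub_mul_sq_norm_le_re_inner_add (𝕜 := ℂ) hhalf using 1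
  · norm_num
  · rfl
end
end

section
/- There exists C > 0 such that for every l ∈ ℤ \ {0}, every μ ∈ ℝ with |μ| > 1, and every u ∈ H¹(𝕋): (|μ| − 1)²‖u + A_l^{−1}u‖² + (|μ| − 1)‖cos y · (u + A_l^{−1}u)‖² + |μ|(|μ| − 1)‖(−A_l)^{−1/2}u‖² ≤ C ‖μu − Λ̂_l u‖². -/
/-!
STATEMENT 10: There exists `C > 0` such that for every `l ∈ ℤ \ {0}`, every `μ ∈ ℝ`
with `|μ| > 1`, and every `u ∈ H¹(𝕋)`:
`(|μ|-1)²‖u + A_l⁻¹u‖² + (|μ|-1)‖cos y·(u + A_l⁻¹u)‖² + |μ|(|μ|-1)‖(-A_l)^{-1/2}u‖²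
   ≤ C ‖μu - Λ̂_l u‖²`.
-/

open MeasureTheory Complex Real AddCircle

noncomputable section

/-- `sin` as a function on the circle `𝕋 = ℝ/(2πℤ)`. -/
def sinT (y : AddCircle (2 * Real.pi)) : ℝ := Real.sin_periodic.lift y

/-- `cos` as a function on the circle `𝕋 = ℝ/(2πℤ)`. -/
def cosT (y : AddCircle (2 * Real.pi)) : ℝ := Real.cos_periodic.lift y

/-- The `L²(𝕋)`-norm of a raw function. -/
def nrmT (v : AddCircle (2 * Real.pi) → ℂ) : ℝ :=
  (eLpNorm v 2 (@AddCircle.haarAddCircle (2 * Real.pi) fact2pi)).toReal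

/-- `u ∈ H¹(𝕋)`. -/
def memH1 (u : HT) : Prop := Summable fun n : ℤ => (n : ℝ)^2 * ‖coefT u n‖^2

/-- `‖(-A_l)^{1/2}u‖² = ‖u'‖² + l²‖u‖²` (by Parseval, `= ∑ (n²+l²)|û(n)|²`). -/
def sqH1 (l : ℤ) (u : HT) : ℝ := ∑' n : ℤ, ((n : ℝ)^2 + (l : ℝ)^2) * ‖coefT u n‖^2

/-- `‖(-A_l)^{-1/2}u‖² = ‖(A_l⁻¹u)'‖² + l²‖A_l⁻¹u‖²` (by Parseval, `= ∑ (n²+l²)⁻¹|û(n)|²`). -/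
def sqHm1 (l : ℤ) (u : HT) : ℝ := ∑' n : ℤ, ((n : ℝ)^2 + (l : ℝ)^2)⁻¹ * ‖coefT u n‖^2


/-!
Write `v = u + A_l⁻¹u`, `F = μu - sin·v` and `s_n = (n² + l²)⁻¹`. On the Fourier side
`v̂(n) = (1 - s_n) û(n)`, so `Re⟪u, v⟫ = ‖v‖² + P` with `P = ∑ s_n (1 - s_n) |û(n)|² ≥ 0`.
Pairing `F` with `σ v`, where `σ` is the sign of `μ`, and using `|sin| ≤ 1` gives
`(|μ| - 1)‖v‖² + |μ| P ≤ E := σ Re⟪F, v⟫ ≤ ‖F‖ ‖v‖`, hence `(|μ| - 1) E ≤ ‖F‖²`. This bounds the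
first term, the cosine term (as `cos² ≤ 2 - 2σ sin`) and `|μ|(|μ| - 1) P`.
Since `s_n ≤ 1/2` for `n ≠ 0`, `‖(-A_l)^{-1/2}u‖² ≤ 2P + |(A_l⁻¹u)^(0)|²`, and the zero mode is
read off from `F̂(0) = μ û(0) - (sin·v)^(0)`, whose last term only involves `v̂(±1)`, which `P`
controls.
-/

open scoped ComplexConjugate
open scoped InnerProductSpace

local notation "μ₀" => @haarAddCircle (2 * Real.pi) fact2pi

lemma mul_le_sq_of_mul_sq_le_of_le_mul {c x f e : ℝ} (hc : 0 ≤ c)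
    (hlow : c * x ^ 2 ≤ e) (hup : e ≤ f * x) : c * e ≤ f ^ 2 := by
  nlinarith [mul_le_mul_of_nonneg_left (hlow.trans hup) hc, mul_le_mul_of_nonneg_left hup hc,
    sq_nonneg (c * x - f)]

/-- `σ Re⟪μu - S, v⟫` lies between `(|μ| - 1)‖v‖²` and `‖μu - S‖ ‖v‖`. -/
lemma sub_one_mul_le_norm_smul_sub_sq {E : Type*} [NormedAddCommGroup E] [InnerProductSpace ℂ E]
    {u v S : E} {μ σ P : ℝ} (hμ : 1 < |μ|) (hσμ : σ * μ = |μ|) (hσ : |σ| ≤ 1) (hP : 0 ≤ P)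
    (huv : re ⟪u, v⟫_ℂ = ‖v‖ ^ 2 + P) (hSv : σ * re ⟪S, v⟫_ℂ ≤ ‖v‖ ^ 2) :
    (|μ| - 1) * (|μ| * (‖v‖ ^ 2 + P) - σ * re ⟪S, v⟫_ℂ) ≤ ‖(μ : ℂ) • u - S‖ ^ 2 := by
  have hpair : |μ| * (‖v‖ ^ 2 + P) - σ * re ⟪S, v⟫_ℂ = σ * re ⟪(μ : ℂ) • u - S, v⟫_ℂ := by
    rw [inner_sub_left, inner_smul_left, conj_ofReal, sub_re, re_ofReal_mul, huv, ← hσμ]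
    ring
  refine mul_le_sq_of_mul_sq_le_of_le_mul (x := ‖v‖) (by linarith) ?_ ?_
  · nlinarith [abs_nonneg μ]
  · rw [hpair]
    calc σ * re ⟪(μ : ℂ) • u - S, v⟫_ℂ ≤ |σ| * ‖⟪(μ : ℂ) • u - S, v⟫_ℂ‖ :=
          (le_abs_self _).trans (by rw [abs_mul]; gcongr; exact abs_re_le_norm _)
      _ ≤ ‖(μ : ℂ) • u - S‖ * ‖v‖ :=
          (mul_le_of_le_one_left (norm_nonneg _) hσ).trans (norm_inner_le_norm _ _)

section Trigonometric

@[simp] lemma sinT_coe (x : ℝ) : sinT x = Real.sin x := rfl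

lemma continuous_sinT : Continuous sinT := Real.continuous_sin.quotient_liftOn' _

lemma continuous_cosT : Continuous cosT := Real.continuous_cos.quotient_liftOn' _

lemma abs_sinT_le_one (y : AddCircle (2 * π)) : |sinT y| ≤ 1 := by
  induction y using QuotientAddGroup.induction_on with
  | H x => exact Real.abs_sin_le_one x

lemma abs_cosT_le_one (y : AddCircle (2 * π)) : |cosT y| ≤ 1 := by
  induction y using QuotientAddGroup.induction_on with
  | H x => exact Real.abs_cos_le_one x

lemma sinT_sq_add_cosT_sq (y : AddCircle (2 * π)) : sinT y ^ 2 + cosT y ^ 2 = 1 := by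
  induction y using QuotientAddGroup.induction_on with
  | H x => exact Real.sin_sq_add_cos_sq x

lemma fourier_coe_two_pi (n : ℤ) (x : ℝ) :
    fourier n (x : AddCircle (2 * π)) = exp (n * x * I) := by
  rw [fourier_coe_apply]
  congr 1
  push_cast
  field_simp

lemma ofReal_sinT (y : AddCircle (2 * π)) :
    (sinT y : ℂ) = (fourier 1 y - fourier (-1) y) / (2 * I) := by
  induction y using QuotientAddGroup.induction_on with
  | H x =>
    rw [sinT_coe, fourier_coe_two_pi, fourier_coe_two_pi, ofReal_sin, Complex.sin]
    push_cast
    field_simp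
    ring_nf
    rw [I_sq]
    ring

end Trigonometric

section Fourier

lemma coefT_eq_repr (u : HT) (n : ℤ) : coefT u n = fourierBasis.repr u n :=
  (fourierBasis_repr u n).symm

@[simp] lemma coefT_add (u v : HT) (n : ℤ) : coefT (u + v) n = coefT u n + coefT v n := by
  simp [coefT_eq_repr]

@[simp] lemma coefT_sub (u v : HT) (n : ℤ) : coefT (u - v) n = coefT u n - coefT v n := by
  simp [coefT_eq_repr]

@[simp] lemma coefT_smul (c : ℂ) (u : HT) (n : ℤ) : coefT (c • u) n = c * coefT u n := by
  simp [coefT_eq_repr]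

lemma hasSum_norm_coefT_sq (u : HT) : HasSum (fun n => ‖coefT u n‖ ^ 2) (‖u‖ ^ 2) := by
  simp_rw [coefT_eq_repr, ← fourierBasis.repr.norm_map u]
  exact_mod_cast lp.hasSum_norm (by simp) (fourierBasis.repr u)

lemma norm_coefT_le (u : HT) (n : ℤ) : ‖coefT u n‖ ≤ ‖u‖ := by
  rw [coefT_eq_repr, ← fourierBasis.repr.norm_map u]
  exact lp.norm_apply_le_norm two_ne_zero _ n

lemma inner_eq_tsum_coefT (u v : HT) :
    ⟪u, v⟫_ℂ = ∑' n, conj (coefT u n) * coefT v n := by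
  rw [← fourierBasis.repr.inner_map_map, lp.inner_eq_tsum]
  simp [coefT_eq_repr, mul_comm]

lemma norm_sq_eq_integral (u : HT) : ‖u‖ ^ 2 = ∫ y, ‖u y‖ ^ 2 ∂μ₀ := by
  rw [← (hasSum_norm_coefT_sq u).tsum_eq]
  exact tsum_sq_fourierCoeff u

end Fourier

section Multiplication

lemma integrable_norm_sq (v : HT) : Integrable (fun y => ‖v y‖ ^ 2) μ₀ :=
  (Lp.memLp v).integrable_norm_pow' (p := 2)

lemma memLp_ofReal_mul {g : AddCircle (2 * π) → ℝ} (hg : Continuous g) (hb : ∀ y, |g y| ≤ 1)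
    (v : HT) : MemLp (fun y => (g y : ℂ) * v y) 2 μ₀ := by
  refine (Lp.memLp v).of_le
    ((continuous_ofReal.comp hg).aestronglyMeasurable.mul (Lp.aestronglyMeasurable v)) ?_
  filter_upwards with y
  rw [norm_mul, norm_real, Real.norm_eq_abs]
  exact mul_le_of_le_one_left (norm_nonneg _) (hb y)

def sinMul (v : HT) : HT := (memLp_ofReal_mul continuous_sinT abs_sinT_le_one v).toLp _

lemma coeFn_sinMul (v : HT) : sinMul v =ᵐ[μ₀] fun y => (sinT y : ℂ) * v y :=
  MemLp.coeFn_toLp _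

lemma nrmT_eq_norm {f : AddCircle (2 * π) → ℂ} {x : HT} (h : x =ᵐ[μ₀] f) : nrmT f = ‖x‖ := by
  rw [Lp.norm_def, nrmT, eLpNorm_congr_ae h]

lemma nrmT_sq_eq_integral {f : AddCircle (2 * π) → ℂ} (hf : MemLp f 2 μ₀) :
    nrmT f ^ 2 = ∫ y, ‖f y‖ ^ 2 ∂μ₀ := by
  rw [nrmT_eq_norm hf.coeFn_toLp, norm_sq_eq_integral]
  exact integral_congr_ae (hf.coeFn_toLp.mono fun y hy => by simp only [hy])

lemma re_inner_sinMul (v : HT) : re ⟪sinMul v, v⟫_ℂ = ∫ y, sinT y * ‖v y‖ ^ 2 ∂μ₀ := by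
  rw [L2.inner_def, ← RCLike.re_to_complex, ← integral_re (L2.integrable_inner _ _)]
  refine integral_congr_ae ((coeFn_sinMul v).mono fun y hy => ?_)
  simp only [hy, RCLike.inner_apply, map_mul, conj_ofReal]
  rw [mul_left_comm, Complex.mul_conj, Complex.normSq_eq_norm_sq, ← ofReal_mul]
  exact ofReal_re _

lemma integrable_sinT_mul_norm_sq (v : HT) : Integrable (fun y => sinT y * ‖v y‖ ^ 2) μ₀ :=
  (integrable_norm_sq v).bdd_mul continuous_sinT.aestronglyMeasurable
    (.of_forall fun y => abs_sinT_le_one y)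

lemma mul_integral_sinT_mul_le {σ : ℝ} (hσ : |σ| ≤ 1) (v : HT) :
    σ * ∫ y, sinT y * ‖v y‖ ^ 2 ∂μ₀ ≤ ‖v‖ ^ 2 := by
  rw [norm_sq_eq_integral, ← integral_const_mul]
  refine integral_mono ((integrable_sinT_mul_norm_sq v).const_mul σ) (integrable_norm_sq v)
    fun y => ?_
  have : |σ * sinT y| ≤ 1 := by
    rw [abs_mul]; exact mul_le_one₀ hσ (abs_nonneg _) (abs_sinT_le_one y)
  nlinarith [le_abs_self (σ * sinT y), sq_nonneg ‖v y‖]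

/-- Pointwise, `2 - 2σ sin - cos² = 1 - 2σ sin + sin² ≥ (1 - |sin|)²`. -/
lemma nrmT_cosT_mul_sq_le {σ : ℝ} (hσ : |σ| ≤ 1) (v : HT) :
    nrmT (fun y => (cosT y : ℂ) * v y) ^ 2
      ≤ 2 * (‖v‖ ^ 2 - σ * ∫ y, sinT y * ‖v y‖ ^ 2 ∂μ₀) := by
  rw [nrmT_sq_eq_integral (memLp_ofReal_mul continuous_cosT abs_cosT_le_one v),
    norm_sq_eq_integral, ← integral_const_mul, ← integral_sub (integrable_norm_sq v)
      ((integrable_sinT_mul_norm_sq v).const_mul σ), ← integral_const_mul]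
  refine integral_mono_of_nonneg (.of_forall fun y => by positivity) (((integrable_norm_sq v).sub
      ((integrable_sinT_mul_norm_sq v).const_mul σ)).const_mul 2) (.of_forall fun y => ?_)
  have hσs : σ * sinT y ≤ |sinT y| :=
    (le_abs_self _).trans (by rw [abs_mul]; exact mul_le_of_le_one_left (abs_nonneg _) hσ)
  have hcos : cosT y ^ 2 ≤ 2 - 2 * (σ * sinT y) := by
    nlinarith [sinT_sq_add_cosT_sq y, sq_abs (sinT y), sq_nonneg (1 - |sinT y|)]
  simp only [norm_mul, norm_real, Real.norm_eq_abs, mul_pow, sq_abs]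
  nlinarith [sq_nonneg ‖v y‖]

lemma norm_coefT_zero_sinMul_le (v : HT) :
    ‖coefT (sinMul v) 0‖ ≤ (‖coefT v 1‖ + ‖coefT v (-1)‖) / 2 := by
  have hint : ∀ k : ℤ, Integrable (fun y => fourier k y * v y) μ₀ := fun k =>
    (Lp.memLp v).integrable one_le_two |>.bdd_mul (fourier k).continuous.aestronglyMeasurable
      (.of_forall fun y => (Circle.norm_coe _).le)
  have hcoef : coefT (sinMul v) 0 = (coefT v (-1) - coefT v 1) / (2 * I) := by
    simp only [coefT, fourierCoeff, neg_zero, fourier_zero, neg_neg, smul_eq_mul, one_mul]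
    rw [integral_congr_ae (coeFn_sinMul v), ← integral_sub (hint 1) (hint (-1)),
      ← integral_div]
    congr 1 with y
    rw [ofReal_sinT]
    ring
  rw [hcoef, norm_div, norm_mul, norm_I, RCLike.norm_ofNat, mul_one, add_comm]
  gcongr
  exact norm_sub_le _ _

end Multiplication

def invSymbol (l n : ℤ) : ℝ := ((n : ℝ) ^ 2 + (l : ℝ) ^ 2)⁻¹

/-- `‖(-A_l)^{-1/2}u‖² - ‖A_l⁻¹u‖²`. -/
def defect (l : ℤ) (u : HT) : ℝ :=
  ∑' n : ℤ, invSymbol l n * (1 - invSymbol l n) * ‖coefT u n‖ ^ 2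

lemma summable_mul_norm_coefT_sq {c : ℤ → ℝ} (hc0 : ∀ n, 0 ≤ c n) (hc1 : ∀ n, c n ≤ 1)
    (u : HT) : Summable fun n => c n * ‖coefT u n‖ ^ 2 :=
  (hasSum_norm_coefT_sq u).summable.of_nonneg_of_le (fun n => by have := hc0 n; positivity)
    fun n => mul_le_of_le_one_left (by positivity) (hc1 n)

lemma one_le_intCast_sq {l : ℤ} (hl : l ≠ 0) : (1 : ℝ) ≤ (l : ℝ) ^ 2 := by
  rw [one_le_sq_iff_one_le_abs]
  exact_mod_cast Int.one_le_abs hl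

section Resolvent

variable {l : ℤ} (hl : l ≠ 0)
include hl

lemma one_le_sq_add_sq (n : ℤ) : (1 : ℝ) ≤ (n : ℝ) ^ 2 + (l : ℝ) ^ 2 := by
  linarith [one_le_intCast_sq hl, sq_nonneg (n : ℝ)]

lemma invSymbol_pos (n : ℤ) : 0 < invSymbol l n :=
  inv_pos.mpr (zero_lt_one.trans_le (one_le_sq_add_sq hl n))

lemma invSymbol_le_one (n : ℤ) : invSymbol l n ≤ 1 :=
  inv_le_one_of_one_le₀ (one_le_sq_add_sq hl n)

lemma invSymbol_le_half {n : ℤ} (hn : n ≠ 0) : invSymbol l n ≤ 1 / 2 := by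
  rw [one_div]
  refine inv_anti₀ two_pos ?_
  linarith [one_le_intCast_sq hl, one_le_intCast_sq hn]

lemma invSymbol_zero_sq_mul_le {n : ℤ} (hn : (n : ℝ) ^ 2 ≤ 1) :
    invSymbol l 0 ^ 2 * (1 - invSymbol l n) ≤ invSymbol l n := by
  have hl1 := one_le_intCast_sq hl
  have hq : (0 : ℝ) < (n : ℝ) ^ 2 + (l : ℝ) ^ 2 := by linarith [sq_nonneg (n : ℝ)]
  simp only [invSymbol, Int.cast_zero]
  rw [← sub_nonneg]
  field_simp
  nlinarith [sq_nonneg (n : ℝ)]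

lemma hasSum_defect (u : HT) :
    HasSum (fun n => invSymbol l n * (1 - invSymbol l n) * ‖coefT u n‖ ^ 2) (defect l u) := by
  have hs := invSymbol_pos hl
  have hs1 := invSymbol_le_one hl
  refine (summable_mul_norm_coefT_sq (fun n => mul_nonneg (hs n).le (by linarith [hs1 n]))
    (fun n => ?_) u).hasSum
  nlinarith [hs n, hs1 n]

lemma defect_nonneg (u : HT) : 0 ≤ defect l u :=
  (hasSum_defect hl u).nonneg fun n =>
    mul_nonneg (mul_nonneg (invSymbol_pos hl n).le (by linarith [invSymbol_le_one hl n]))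
      (sq_nonneg _)

variable {u w : HT} (hw : ∀ n : ℤ, ((n : ℂ) ^ 2 + (l : ℂ) ^ 2) * coefT w n = - coefT u n)
include hw

lemma coefT_resolvent (n : ℤ) : coefT w n = -(invSymbol l n : ℂ) * coefT u n := by
  have hq : ((n : ℂ) ^ 2 + (l : ℂ) ^ 2) ≠ 0 := by
    exact_mod_cast (zero_lt_one.trans_le (one_le_sq_add_sq hl n)).ne'
  rw [invSymbol]
  push_cast
  field_simp
  linear_combination hw n

lemma coefT_add_resolvent (n : ℤ) :
    coefT (u + w) n = ((1 - invSymbol l n : ℝ) : ℂ) * coefT u n := by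
  rw [coefT_add, coefT_resolvent hl hw]
  push_cast
  ring

lemma norm_coefT_add_resolvent (n : ℤ) :
    ‖coefT (u + w) n‖ = (1 - invSymbol l n) * ‖coefT u n‖ := by
  rw [coefT_add_resolvent hl hw, norm_mul, norm_real, Real.norm_eq_abs,
    abs_of_nonneg (by linarith [invSymbol_le_one hl n])]

lemma sqHm1_le_two_mul_defect : sqHm1 l u ≤ 2 * defect l u + ‖coefT w 0‖ ^ 2 := by
  have hs := invSymbol_pos hl
  refine hasSum_le (fun n => ?_)
    (summable_mul_norm_coefT_sq (fun n => (hs n).le) (invSymbol_le_one hl) u).hasSum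
    (((hasSum_defect hl u).mul_left 2).add (hasSum_ite_eq 0 _))
  split_ifs with hn
  · rw [hn, coefT_resolvent hl hw, norm_mul, norm_neg, norm_real, Real.norm_eq_abs,
      abs_of_pos (hs 0)]
    nlinarith [hs 0, invSymbol_le_one hl 0, sq_nonneg ‖coefT u 0‖]
  · have : 0 ≤ 1 - 2 * invSymbol l n := by linarith [invSymbol_le_half hl hn]
    nlinarith [mul_nonneg (mul_nonneg (hs n).le this) (sq_nonneg ‖coefT u n‖)]

lemma re_inner_add_resolvent : re ⟪u, u + w⟫_ℂ = ‖u + w‖ ^ 2 + defect l u := by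
  have hV : HasSum (fun n => (1 - invSymbol l n) ^ 2 * ‖coefT u n‖ ^ 2) (‖u + w‖ ^ 2) := by
    convert hasSum_norm_coefT_sq (u + w) using 2 with n
    rw [norm_coefT_add_resolvent hl hw, mul_pow]
  rw [inner_eq_tsum_coefT, ← (hV.add (hasSum_defect hl u)).tsum_eq, ← ofReal_re (∑' n, _),
    ofReal_tsum]
  congr 1
  refine tsum_congr fun n => ?_
  rw [coefT_add_resolvent hl hw, mul_left_comm, Complex.conj_mul']
  push_cast
  ring

lemma invSymbol_zero_sq_mul_le_defect :
    invSymbol l 0 ^ 2 * (‖coefT (u + w) 1‖ ^ 2 + ‖coefT (u + w) (-1)‖ ^ 2) ≤ defect l u := by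
  have hterm : ∀ n : ℤ, (n : ℝ) ^ 2 ≤ 1 → invSymbol l 0 ^ 2 * ‖coefT (u + w) n‖ ^ 2
      ≤ invSymbol l n * (1 - invSymbol l n) * ‖coefT u n‖ ^ 2 := fun n hn => by
    have := mul_le_mul_of_nonneg_right (invSymbol_zero_sq_mul_le hl hn)
      (mul_nonneg (sub_nonneg.mpr (invSymbol_le_one hl n)) (sq_nonneg ‖coefT u n‖))
    rw [norm_coefT_add_resolvent hl hw]
    linarith
  calc _ = ∑ n ∈ ({1, -1} : Finset ℤ), invSymbol l 0 ^ 2 * ‖coefT (u + w) n‖ ^ 2 := by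
        rw [Finset.sum_pair (by norm_num)]
        ring
    _ ≤ ∑ n ∈ ({1, -1} : Finset ℤ), invSymbol l n * (1 - invSymbol l n) * ‖coefT u n‖ ^ 2 :=
        Finset.sum_le_sum fun n hn => hterm n (by
          rcases Finset.mem_insert.mp hn with rfl | hn <;> simp_all)
    _ ≤ defect l u :=
        (hasSum_defect hl u).summable.sum_le_tsum _ fun n _ =>
          mul_nonneg (mul_nonneg (invSymbol_pos hl n).le
            (sub_nonneg.mpr (invSymbol_le_one hl n))) (sq_nonneg _)

end Resolvent

lemma sq_abs_mul_norm_coefT_zero_le {l : ℤ} (hl : l ≠ 0) {u w : HT}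
    (hw : ∀ n : ℤ, ((n : ℂ) ^ 2 + (l : ℂ) ^ 2) * coefT w n = - coefT u n) (μ : ℝ) :
    (|μ| * ‖coefT w 0‖) ^ 2 ≤ 2 * ‖(μ : ℂ) • u - sinMul (u + w)‖ ^ 2 + defect l u := by
  set F := (μ : ℂ) • u - sinMul (u + w)
  set s₀ := invSymbol l 0
  have hs₀ : 0 < s₀ := invSymbol_pos hl 0
  have hw₀ : ‖coefT w 0‖ = s₀ * ‖coefT u 0‖ := by
    rw [coefT_resolvent hl hw, norm_mul, norm_neg, norm_real, Real.norm_eq_abs, abs_of_pos hs₀]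
  have hμu : |μ| * ‖coefT u 0‖ ≤ ‖F‖ + (‖coefT (u + w) 1‖ + ‖coefT (u + w) (-1)‖) / 2 := by
    have hsplit : (μ : ℂ) * coefT u 0 = coefT F 0 + coefT (sinMul (u + w)) 0 := by
      simp only [F, coefT_sub, coefT_smul, sub_add_cancel]
    rw [← Real.norm_eq_abs, ← norm_real, ← norm_mul, hsplit]
    exact (norm_add_le _ _).trans
      (add_le_add (norm_coefT_le F 0) (norm_coefT_zero_sinMul_le (u + w)))
  calc (|μ| * ‖coefT w 0‖) ^ 2
      ≤ (‖F‖ + s₀ * ((‖coefT (u + w) 1‖ + ‖coefT (u + w) (-1)‖) / 2)) ^ 2 := by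
        rw [hw₀]
        gcongr ?_ ^ 2
        nlinarith [invSymbol_le_one hl 0, norm_nonneg F]
    _ ≤ 2 * ‖F‖ ^ 2 + s₀ ^ 2 * (‖coefT (u + w) 1‖ ^ 2 + ‖coefT (u + w) (-1)‖ ^ 2) := by
        nlinarith [sq_nonneg (‖F‖ - s₀ * ((‖coefT (u + w) 1‖ + ‖coefT (u + w) (-1)‖) / 2)),
          sq_nonneg (s₀ * (‖coefT (u + w) 1‖ - ‖coefT (u + w) (-1)‖))]
    _ ≤ 2 * ‖F‖ ^ 2 + defect l u := by
        linarith [invSymbol_zero_sq_mul_le_defect hl hw]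

lemma abs_mul_sub_one_mul_sqHm1_le {l : ℤ} (hl : l ≠ 0) {u w : HT}
    (hw : ∀ n : ℤ, ((n : ℂ) ^ 2 + (l : ℂ) ^ 2) * coefT w n = - coefT u n) {μ : ℝ}
    (hμ : 1 ≤ |μ|) :
    |μ| * (|μ| - 1) * sqHm1 l u
      ≤ 2 * ‖(μ : ℂ) • u - sinMul (u + w)‖ ^ 2 + 3 * (|μ| * (|μ| - 1) * defect l u) := by
  have hm : 0 ≤ |μ| - 1 := by linarith
  have hP := defect_nonneg hl u
  have h₀ := sq_abs_mul_norm_coefT_zero_le hl hw μ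
  have hzero : |μ| * (|μ| - 1) * ‖coefT w 0‖ ^ 2
      ≤ 2 * ‖(μ : ℂ) • u - sinMul (u + w)‖ ^ 2 + |μ| * (|μ| - 1) * defect l u := by
    -- multiply by `|μ|` and use `(|μ| - 1) P ≤ |μ|² (|μ| - 1) P`
    refine le_of_mul_le_mul_left ?_ (by linarith : 0 < |μ|)
    nlinarith [mul_le_mul_of_nonneg_left h₀ hm, mul_nonneg (mul_nonneg hm hP)
      (by nlinarith : (0 : ℝ) ≤ |μ| ^ 2 - 1), norm_nonneg ((μ : ℂ) • u - sinMul (u + w))]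
  nlinarith [mul_le_mul_of_nonneg_left (sqHm1_le_two_mul_defect hl hw)
    (mul_nonneg (abs_nonneg μ) hm)]

lemma nrmT_add (u w : HT) : nrmT (fun y => u y + w y) = ‖u + w‖ :=
  nrmT_eq_norm (Lp.coeFn_add u w)

lemma nrmT_cosT_mul_add (u w : HT) :
    nrmT (fun y => (cosT y : ℂ) * (u y + w y)) = nrmT (fun y => (cosT y : ℂ) * (u + w) y) := by
  refine congrArg ENNReal.toReal (eLpNorm_congr_ae ?_)
  filter_upwards [Lp.coeFn_add u w] with y hy
  rw [hy, Pi.add_apply]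

lemma nrmT_smul_sub_sinMul (μ : ℝ) (u w : HT) :
    nrmT (fun y => (μ : ℂ) * u y - (sinT y : ℂ) * (u y + w y))
      = ‖(μ : ℂ) • u - sinMul (u + w)‖ := by
  refine nrmT_eq_norm ?_
  filter_upwards [Lp.coeFn_sub ((μ : ℂ) • u) (sinMul (u + w)), Lp.coeFn_smul (μ : ℂ) u,
    coeFn_sinMul (u + w), Lp.coeFn_add u w] with y h₁ h₂ h₃ h₄
  simp only [h₁, Pi.sub_apply, h₂, h₃, h₄, Pi.smul_apply, Pi.add_apply, smul_eq_mul]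

theorem stmt10
    (invA : ℤ → HT → HT)
    (hinvA : ∀ (l : ℤ), l ≠ 0 → ∀ (u : HT) (n : ℤ),
      ((n : ℂ)^2 + (l : ℂ)^2) * coefT (invA l u) n = - coefT u n) :
    ∃ C > (0:ℝ),
      ∀ l : ℤ, l ≠ 0 → ∀ μ : ℝ, 1 < |μ| → ∀ u : HT, memH1 u →
        (|μ| - 1)^2 * nrmT (fun y => u y + invA l u y)^2
          + (|μ| - 1) * nrmT (fun y => (cosT y : ℂ) * (u y + invA l u y))^2
          + |μ| * (|μ| - 1) * sqHm1 l u
        ≤ C * nrmT (fun y => (μ : ℂ) * u y - (sinT y : ℂ) * (u y + invA l u y))^2 := by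
  refine ⟨8, by norm_num, fun l hl μ hμ u _ => ?_⟩
  have hw := hinvA l hl u
  set v := u + invA l u
  set σ := μ / |μ|
  have hσμ : σ * μ = |μ| := by rw [div_mul_eq_mul_div, ← sq, ← sq_abs, sq, mul_self_div_self]
  have hσ : |σ| ≤ 1 := by rw [abs_div, abs_abs, div_self (by positivity)]
  have hT := mul_integral_sinT_mul_le hσ v
  have hP := defect_nonneg hl u
  have hE := sub_one_mul_le_norm_smul_sub_sq hμ hσμ hσ hP (re_inner_add_resolvent hl hw)
    (by rwa [re_inner_sinMul])
  rw [re_inner_sinMul] at hE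
  have hcos := nrmT_cosT_mul_sq_le hσ v
  have hH := abs_mul_sub_one_mul_sqHm1_le hl hw hμ.le
  rw [nrmT_add, nrmT_cosT_mul_add, nrmT_smul_sub_sinMul]
  set E := |μ| * (‖v‖ ^ 2 + defect l u) - σ * ∫ y, sinT y * ‖v y‖ ^ 2 ∂μ₀
  have hm : 0 ≤ |μ| - 1 := by linarith
  have hvE : (|μ| - 1) * ‖v‖ ^ 2 ≤ E := by nlinarith
  have hPE : |μ| * defect l u ≤ E := by nlinarith
  have hcosE : nrmT (fun y => (cosT y : ℂ) * v y) ^ 2 ≤ 2 * E := by nlinarith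
  nlinarith [mul_le_mul_of_nonneg_left hvE hm, mul_le_mul_of_nonneg_left hcosE hm,
    mul_le_mul_of_nonneg_left hPE hm]
end
end
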